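/- Let A be maximally monotone on a real Hilbert space H with single-valued full-domain resolvent J_A, let B : H → H be β-cocoercive with β > 0, and set T = J_A ∘ (Id − B). Then for any fixed point ω* of T and any ω ∈ H, ⟨ω − ω*, ω − Tω⟩ ≥ ‖ω − Tω‖² + ⟨Tω − ω*, Bω − Bω*⟩. -/
import Mathlib


open scoped RealInnerProductSpace

/-- A set-valued operator on a real inner product space is monotone. -/
def MonotoneOp {H : Type*} [NormedAddCommGroup H] [InnerProductSpace ℝ H]
    (A : H → Set H) : Prop :=
  ∀ x y u v, u ∈ A x → v ∈ A y → 0 ≤ ⟪x - y, u - v⟫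

/-- A set-valued operator is maximally monotone. -/
def MaximallyMonotoneOp {H : Type*} [NormedAddCommGroup H] [InnerProductSpace ℝ H]
    (A : H → Set H) : Prop :=
  MonotoneOp A ∧ ∀ x u, (∀ y v, v ∈ A y → 0 ≤ ⟪x - y, u - v⟫) → u ∈ A x

/-- For `T = J_A ∘ (Id − B)` with `A` maximally monotone (resolvent `J`) and `B`
`β`-cocoercive, and `ω*` a fixed point of `T`:
`⟨ω − ω*, ω − Tω⟩ ≥ ‖ω − Tω‖² + ⟨Tω − ω*, Bω − Bω*⟩`. -/
theorem stmt6 {H : Type*} [NormedAddCommGroup H] [InnerProductSpace ℝ H] [CompleteSpace H]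
    (A : H → Set H) (hA : MaximallyMonotoneOp A)
    (J : H → H) (hJ : ∀ y, y - J y ∈ A (J y))   -- `J` is the resolvent `(Id + A)⁻¹`
    (B : H → H) (β : ℝ) (hβ : 0 < β)
    (hcoco : ∀ x y, β * ‖B x - B y‖ ^ 2 ≤ ⟪x - y, B x - B y⟫)
    (T : H → H) (hT : ∀ x, T x = J (x - B x))
    (ωstar : H) (hfix : T ωstar = ωstar) (ω : H) :
    ‖ω - T ω‖ ^ 2 + ⟪T ω - ωstar, B ω - B ωstar⟫ ≤ ⟪ω - ωstar, ω - T ω⟫ := by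
  have hu : (ω - B ω) - T ω ∈ A (T ω) := by
    rw [hT]; exact hJ _
  have hv : (ωstar - B ωstar) - ωstar ∈ A ωstar := by
    have h := hJ (ωstar - B ωstar)
    rwa [← hT, hfix] at h
  have hmono := hA.1 (T ω) ωstar _ _ hu hv
  have h1 : ⟪ω - ωstar, ω - T ω⟫ =
      ‖ω - T ω‖ ^ 2 + ⟪T ω - ωstar, ω - T ω⟫ := by
    have : ω - ωstar = (ω - T ω) + (T ω - ωstar) := by abel
    rw [this, inner_add_left, real_inner_self_eq_norm_sq]
  have h2 : ((ω - B ω) - T ω) - ((ωstar - B ωstar) - ωstar)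
      = (ω - T ω) - (B ω - B ωstar) := by abel
  rw [h2, inner_sub_right] at hmono
  linarith [h1, hmono]
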